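/- Let d ≥ 1, let σ²: Fin d → ℝ≥0, let μ be the product measure on ℝ^d whose i-th coordinate is the centered real Gaussian measure with variance σᵢ², let ε ≥ 0, let w* ∈ ℝ^d, and let w̃(0) ∈ ℝ^d. Define the asymptotic GD solution w^GD ∈ ℝ^d by w^GD_i = w*_i if σᵢ² > 0 and w^GD_i = w̃ᵢ(0) if σᵢ² = 0. Then the adversarial risk of w^GD equals R_a(w^GD) = (ε²/2)·( ∑_{i : σᵢ² > 0} (w*_i)² + ∑_{i : σᵢ² = 0} (w̃ᵢ(0))² ). -/

import Mathlib

open MeasureTheory ProbabilityTheory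
open scoped NNReal

/-
The data term `⟨x, w^GD - w*⟩` vanishes almost surely: on coordinates with `σᵢ² > 0` the weights
agree, and on the others `xᵢ = 0` almost surely because the factor is a Dirac mass. What is left
is the supremum of `½⟨Δ, w⟩²` over the ball of radius `ε`, which is `ε²‖w‖²/2` by Cauchy–Schwarz,
attained at `Δ = ε w / ‖w‖`.
-/

/-- The adversarial risk under the product Gaussian measure. -/
noncomputable def advRisk (d : ℕ) (σsq : Fin d → ℝ≥0) (wstar : Fin d → ℝ) (ε : ℝ)
    (w : Fin d → ℝ) : ℝ :=
  ∫ x : Fin d → ℝ,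
      sSup ((fun (Δ : Fin d → ℝ) =>
          (1/2) * ((∑ i, x i * (w i - wstar i)) + ∑ i, Δ i * w i)^2) ''
        {Δ | Real.sqrt (∑ i, (Δ i)^2) ≤ ε})
      ∂(Measure.pi fun i => gaussianReal 0 (σsq i))

section

variable {ι : Type*} [Fintype ι]

theorem isGreatest_half_sq_sum_mul (w : ι → ℝ) {ε : ℝ} (hε : 0 ≤ ε) :
    IsGreatest ((fun Δ : ι → ℝ => 1 / 2 * (∑ i, Δ i * w i) ^ 2) ''
      {Δ | Real.sqrt (∑ i, Δ i ^ 2) ≤ ε}) (ε ^ 2 / 2 * ∑ i, w i ^ 2) := by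
  set S := ∑ i, w i ^ 2 with hS_def
  have hS : 0 ≤ S := Finset.sum_nonneg fun i _ => sq_nonneg (w i)
  -- For `S = 0` this witness is `Δ = 0` (as `ε / 0 = 0`), which is still a maximizer.
  refine ⟨⟨fun i => ε / Real.sqrt S * w i, ?_, ?_⟩, ?_⟩
  · have hnorm : ∑ i, (ε / Real.sqrt S * w i) ^ 2 = ε ^ 2 * (S / S) := by
      simp_rw [mul_pow, ← Finset.mul_sum, div_pow, Real.sq_sqrt hS, ← hS_def]
      ring
    rw [Set.mem_ofPred_eq, Real.sqrt_le_iff, hnorm]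
    exact ⟨hε, mul_le_of_le_one_right (sq_nonneg ε) (div_self_le_one S)⟩
  · have hdot : ∑ i, ε / Real.sqrt S * w i * w i = ε * Real.sqrt S := by
      simp_rw [mul_assoc, ← sq, ← Finset.mul_sum, ← hS_def, div_mul_eq_mul_div, mul_div_assoc,
        Real.div_sqrt]
    simp only [hdot, mul_pow, Real.sq_sqrt hS]
    ring
  · rintro _ ⟨Δ, hΔ, rfl⟩
    obtain ⟨-, hΔ⟩ := Real.sqrt_le_iff.mp hΔ
    have := Finset.sum_mul_sq_le_sq_mul_sq Finset.univ Δ w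
    nlinarith [mul_le_mul_of_nonneg_right hΔ hS]

theorem ae_pi_gaussianReal_eval_eq_zero (v : ι → ℝ≥0) :
    ∀ᵐ x ∂(Measure.pi fun i => gaussianReal 0 (v i)), ∀ i, v i = 0 → x i = 0 := by
  rw [ae_all_iff]
  intro i
  by_cases hi : v i = 0
  · have hdirac : ∀ᵐ y ∂(gaussianReal 0 (v i)), y = 0 := by
      rw [hi, gaussianReal_zero_var, ae_dirac_eq]
      exact Filter.eventually_pure.mpr rfl
    exact (Measure.tendsto_eval_ae_ae (μ := fun i => gaussianReal 0 (v i)) (i := i)).eventually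
      hdirac |>.mono fun x hx _ => hx
  · exact ae_of_all _ fun _ h => absurd h hi

end

theorem advRisk_eq_of_ae_sum_mul_sub_eq_zero {d : ℕ} (σsq : Fin d → ℝ≥0) (wstar : Fin d → ℝ)
    {ε : ℝ} (hε : 0 ≤ ε) (w : Fin d → ℝ)
    (h : ∀ᵐ x ∂(Measure.pi fun i => gaussianReal 0 (σsq i)), ∑ i, x i * (w i - wstar i) = 0) :
    advRisk d σsq wstar ε w = ε ^ 2 / 2 * ∑ i, w i ^ 2 := by
  rw [advRisk, integral_congr_ae (g := fun _ => ε ^ 2 / 2 * ∑ i, w i ^ 2) (h.mono fun x hx => ?_),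
    integral_const]
  · simp
  · simp only [hx, zero_add]
    exact (isGreatest_half_sq_sum_mul w hε).csSup_eq

theorem adv_risk_gd_solution_general (d : ℕ)
    (σsq : Fin d → ℝ≥0) (ε : ℝ) (hε : 0 ≤ ε) (wstar w0 : Fin d → ℝ)
    (wGD : Fin d → ℝ) (hwGD : ∀ i, wGD i = if 0 < σsq i then wstar i else w0 i) :
    advRisk d σsq wstar ε wGD
      = ε^2 / 2 *
        ((∑ i ∈ Finset.univ.filter (fun i => 0 < σsq i), (wstar i)^2)
          + ∑ i ∈ Finset.univ.filter (fun i => σsq i = 0), (w0 i)^2) := by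
  obtain rfl : wGD = fun i => if 0 < σsq i then wstar i else w0 i := funext hwGD
  rw [advRisk_eq_of_ae_sum_mul_sub_eq_zero σsq wstar hε]
  · simp_rw [apply_ite (· ^ 2), Finset.sum_ite, not_lt, nonpos_iff_eq_zero]
  · filter_upwards [ae_pi_gaussianReal_eval_eq_zero σsq] with x hx
    refine Finset.sum_eq_zero fun i _ => ?_
    split_ifs with hi
    · rw [sub_self, mul_zero]
    · rw [hx i (nonpos_iff_eq_zero.mp (not_lt.mp hi)), zero_mul]

/-- The adversarial risk of the asymptotic GD solution (equal to `w*` on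
relevant frequencies and to the initialization on irrelevant ones):
`R_a(w^GD) = (ε²/2)(∑_{σᵢ²>0} (wᵢ*)² + ∑_{σᵢ²=0} (w̃ᵢ(0))²)`. -/
theorem adv_risk_gd_solution (d : ℕ) (hd : 1 ≤ d)
    (σsq : Fin d → ℝ≥0) (ε : ℝ) (hε : 0 ≤ ε) (wstar w0 : Fin d → ℝ)
    (wGD : Fin d → ℝ) (hwGD : ∀ i, wGD i = if 0 < σsq i then wstar i else w0 i) :
    advRisk d σsq wstar ε wGD
      = ε^2 / 2 *
        ((∑ i ∈ Finset.univ.filter (fun i => 0 < σsq i), (wstar i)^2)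
          + ∑ i ∈ Finset.univ.filter (fun i => σsq i = 0), (w0 i)^2) :=
  adv_risk_gd_solution_general d σsq ε hε wstar w0 wGD hwGD
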